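/- For every n and every Motzkin path p of length n, there exists a permutation w of {1,…,n} with φ(w) = p; that is, the map φ from permutations of {1,…,n} to Motzkin paths of length n is surjective. -/

import Mathlib

/-- The three kinds of steps of a Motzkin path. -/
inductive Step : Type
  | U : Step
  | D : Step
  | H : Step
deriving DecidableEq
instance : Fintype Step :=
  ⟨{Step.U, Step.D, Step.H}, fun x => by cases x <;> simp⟩
/-- Number of indices `i` with `i < m` (i.e. in the prefix of length `m`,
with 0-based indexing) at which the word `p` has the letter `s`. -/
def countIn {n : ℕ} (p : Fin n → Step) (s : Step) (m : ℕ) : ℕ :=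
  (Finset.univ.filter (fun i : Fin n => (i : ℕ) < m ∧ p i = s)).card
/-- A word `p` of length `n` over `{U, D, H}` is a Motzkin path if every
prefix contains at least as many `U`'s as `D`'s and the whole word contains
equally many `U`'s and `D`'s. -/
def IsMotzkin {n : ℕ} (p : Fin n → Step) : Prop :=
  (∀ m ≤ n, countIn p Step.D m ≤ countIn p Step.U m) ∧
  countIn p Step.U n = countIn p Step.D n
/-- The map `φ` from permutations of `{1,…,n}` to words over `{U,D,H}`:
`p_i = U` if `w⁻¹(i) > i < w(i)`, `p_i = D` if `w⁻¹(i) < i > w(i)`,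
and `p_i = H` otherwise. -/
def phi {n : ℕ} (w : Equiv.Perm (Fin n)) : Fin n → Step := fun i =>
  if i < w.symm i ∧ i < w i then Step.U
  else if w.symm i < i ∧ w i < i then Step.D
  else Step.H

/-!
Match the `j`-th `U` of `p` with its `j`-th `D`. The prefix condition forces the `j`-th `D` to
come after the `j`-th `U`, so the involution exchanging matched positions and fixing the `H`'s
sends each `U` upwards and each `D` downwards. Being its own inverse, it is a permutation `w`
with `φ(w) = p`.
-/

open Finset

namespace Finset

section Exchange

variable {α : Type*} [DecidableEq α] {s t : Finset α}

def exchange (e : s ≃ t) (x : α) : α :=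
  if hx : x ∈ s then e ⟨x, hx⟩ else if hx : x ∈ t then e.symm ⟨x, hx⟩ else x

theorem exchange_apply_of_mem_left (e : s ≃ t) {x : α} (hx : x ∈ s) :
    exchange e x = e ⟨x, hx⟩ :=
  dif_pos hx

theorem exchange_apply_of_mem_right (hst : Disjoint s t) (e : s ≃ t) {x : α} (hx : x ∈ t) :
    exchange e x = e.symm ⟨x, hx⟩ := by
  rw [exchange, dif_neg (disjoint_right.1 hst hx), dif_pos hx]

theorem exchange_apply_of_notMem (e : s ≃ t) {x : α} (hs : x ∉ s) (ht : x ∉ t) :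
    exchange e x = x := by
  rw [exchange, dif_neg hs, dif_neg ht]

theorem exchange_involutive (hst : Disjoint s t) (e : s ≃ t) :
    Function.Involutive (exchange e) := by
  intro x
  by_cases hs : x ∈ s
  · rw [exchange_apply_of_mem_left e hs, exchange_apply_of_mem_right hst e (e ⟨x, hs⟩).2]
    simp
  by_cases ht : x ∈ t
  · rw [exchange_apply_of_mem_right hst e ht, exchange_apply_of_mem_left e (e.symm ⟨x, ht⟩).2]
    simp
  rw [exchange_apply_of_notMem e hs ht, exchange_apply_of_notMem e hs ht]

end Exchange

section Matching

variable {α : Type*} [LinearOrder α]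

theorem orderEmbOfFin_le_iff_lt_card_filter_le {s : Finset α} {k : ℕ} (hs : #s = k) (j : Fin k)
    (d : α) : s.orderEmbOfFin hs j ≤ d ↔ (j : ℕ) < #{x ∈ s | x ≤ d} := by
  set e := s.orderEmbOfFin hs
  have hcard : #{x ∈ s | x ≤ d} = #{i | e i ≤ d} := by
    conv_lhs => rw [← map_orderEmbOfFin_univ s hs, filter_map, card_map]
    rfl
  rw [hcard]
  constructor
  · intro hj
    have hsub : Iic j ⊆ ({i | e i ≤ d} : Finset _) := fun i hi =>
      mem_filter.2 ⟨mem_univ i, (e.monotone (mem_Iic.1 hi)).trans hj⟩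
    simpa using card_le_card hsub
  · intro hj
    by_contra! hdj
    have hsub : ({i | e i ≤ d} : Finset _) ⊆ Iio j := fun i hi => by
      simp only [mem_filter, mem_univ, true_and] at hi
      exact mem_Iio.2 (e.lt_iff_lt.1 (hi.trans_lt hdj))
    simpa using (card_le_card hsub).trans_lt' hj

theorem orderEmbOfFin_le_orderEmbOfFin_of_card_filter_le {s t : Finset α} {k : ℕ} (hs : #s = k)
    (ht : #t = k) (h : ∀ d, #{x ∈ t | x ≤ d} ≤ #{x ∈ s | x ≤ d}) (j : Fin k) :
    s.orderEmbOfFin hs j ≤ t.orderEmbOfFin ht j :=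
  (orderEmbOfFin_le_iff_lt_card_filter_le hs j _).2 <|
    ((orderEmbOfFin_le_iff_lt_card_filter_le ht j _).1 le_rfl).trans_le (h _)

def orderMatching (s t : Finset α) (h : #t = #s) : s ≃o t :=
  (s.orderIsoOfFin rfl).symm.trans (t.orderIsoOfFin h)

theorem lt_orderMatching {s t : Finset α} (hst : Disjoint s t) (h : #t = #s)
    (hle : ∀ d, #{x ∈ t | x ≤ d} ≤ #{x ∈ s | x ≤ d}) (x : s) :
    (x : α) < orderMatching s t h x := by
  obtain ⟨j, rfl⟩ := (s.orderIsoOfFin rfl).surjective x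
  have hj : (orderMatching s t h (s.orderIsoOfFin rfl j) : α) = t.orderEmbOfFin h j := by
    simp [orderMatching]
  rw [hj, coe_orderIsoOfFin_apply]
  refine (orderEmbOfFin_le_orderEmbOfFin_of_card_filter_le rfl h hle j).lt_of_ne fun heq => ?_
  exact disjoint_left.1 hst (orderEmbOfFin_mem s rfl j) (heq ▸ orderEmbOfFin_mem t h j)

end Matching

end Finset

theorem phi_apply_of_symm_eq {n : ℕ} {w : Equiv.Perm (Fin n)} (hw : w.symm = w) (i : Fin n) :
    phi w i = if i < w i then Step.U else if w i < i then Step.D else Step.H := by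
  simp only [phi, hw, and_self]

def positions {n : ℕ} (p : Fin n → Step) (s : Step) : Finset (Fin n) := {i | p i = s}

section Positions

variable {n : ℕ} {p : Fin n → Step}

theorem mem_positions {s : Step} {i : Fin n} : i ∈ positions p s ↔ p i = s := by
  simp [positions]

theorem disjoint_positions {s s' : Step} (h : s ≠ s') :
    Disjoint (positions p s) (positions p s') :=
  disjoint_filter.2 fun _ _ hs hs' => h (hs.symm.trans hs')

theorem countIn_add_one_eq_card_filter_le (s : Step) (d : Fin n) :
    countIn p s (d + 1) = #{x ∈ positions p s | x ≤ d} := by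
  rw [countIn, positions, filter_filter]
  congr 1
  ext x
  simp only [mem_filter, mem_univ, true_and, Fin.le_def, Nat.lt_add_one_iff, and_comm]

theorem countIn_length_eq_card_positions (s : Step) : countIn p s n = #(positions p s) := by
  simp [countIn, positions]

theorem IsMotzkin.card_D_eq_card_U (hp : IsMotzkin p) : #(positions p .D) = #(positions p .U) := by
  rw [← countIn_length_eq_card_positions, ← countIn_length_eq_card_positions, hp.2]

theorem IsMotzkin.card_D_le_card_U_of_le (hp : IsMotzkin p) (d : Fin n) :
    #{x ∈ positions p .D | x ≤ d} ≤ #{x ∈ positions p .U | x ≤ d} := by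
  rw [← countIn_add_one_eq_card_filter_le, ← countIn_add_one_eq_card_filter_le]
  exact hp.1 _ d.isLt

end Positions

/-- For every `n` and every Motzkin path `p` of length `n`, there exists a
permutation `w` of `{1,…,n}` with `φ(w) = p`; that is, `φ` is surjective
onto Motzkin paths of length `n`. -/
theorem phi_surjective_onto_motzkin (n : ℕ) (p : Fin n → Step) (hp : IsMotzkin p) :
    ∃ w : Equiv.Perm (Fin n), phi w = p := by
  have hUD : Disjoint (positions p .U) (positions p .D) := disjoint_positions (by decide)
  set e := orderMatching _ _ hp.card_D_eq_card_U
  have hlt : ∀ x : positions p .U, (x : Fin n) < e x :=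
    lt_orderMatching hUD _ hp.card_D_le_card_U_of_le
  have he := exchange_involutive hUD e.toEquiv
  refine ⟨he.toPerm _, funext fun i => ?_⟩
  rw [phi_apply_of_symm_eq he.toPerm_symm, he.coe_toPerm]
  cases hpi : p i with
  | U =>
    have hi : i ∈ positions p .U := mem_positions.2 hpi
    rw [exchange_apply_of_mem_left _ hi]
    exact if_pos (hlt ⟨i, hi⟩)
  | D =>
    have hi : i ∈ positions p .D := mem_positions.2 hpi
    have hgt : (e.symm ⟨i, hi⟩ : Fin n) < i := by simpa using hlt (e.symm ⟨i, hi⟩)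
    rw [exchange_apply_of_mem_right hUD _ hi]
    exact (if_neg hgt.not_gt).trans (if_pos hgt)
  | H =>
    have hU : i ∉ positions p .U := by simp [mem_positions, hpi]
    have hD : i ∉ positions p .D := by simp [mem_positions, hpi]
    rw [exchange_apply_of_notMem _ hU hD, if_neg (lt_irrefl i), if_neg (lt_irrefl i)]
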